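/- arXiv:2504.17033 — 2 statements merged into one kernel-verified Lean document; each statement's English description precedes it below -/
import Mathlib

section
/- Pull Minimum lemma, first part: let d̂ be an estimate function, let B, 𝓑 ∈ ℝ≥0∞ with 𝓑 < B, and let S be a set of vertices such that for every vertex v with d̂(v) ≠ d(v) and d(v) < B there exists a complete vertex u ∈ S such that the shortest path to v visits u. Let X := {x ∈ S : d̂(x) < 𝓑}. Then for every vertex v with d̂(v) ≠ d(v) and d(v) < 𝓑, there exists a complete vertex u ∈ X such that the shortest path to v visits u. -/
open scoped ENNReal

namespace SSSP

variable {V : Type*}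

/-- The weight of a walk (a list of vertices): the sum of `w` over consecutive pairs.
A one-vertex walk has weight 0. -/
noncomputable def walkWeight (w : V → V → ℝ≥0∞) : List V → ℝ≥0∞
  | [] => 0
  | [_] => 0
  | a :: b :: p => w a b + walkWeight w (b :: p)

/-- `p` is a walk from `u` to `v`: a nonempty list beginning at `u` and ending at `v`. -/
def IsWalk (u v : V) (p : List V) : Prop :=
  p ≠ [] ∧ p.head? = some u ∧ p.getLast? = some v

/-- The distance from `u` to `v`: the infimum of the weights of all walks from `u` to `v`. -/
noncomputable def dist (w : V → V → ℝ≥0∞) (u v : V) : ℝ≥0∞ :=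
  ⨅ p : {p : List V // IsWalk u v p}, walkWeight w p.1

/-- The shortest path (from `s`) to `v` visits `u`. -/
def Visits (w : V → V → ℝ≥0∞) (s u v : V) : Prop :=
  dist w s u + dist w u v = dist w s v

/-- The uniqueness assumption: any two distinct walks starting from `s` with finite
weight have different weights. -/
def UniqueWeights (w : V → V → ℝ≥0∞) (s : V) : Prop :=
  ∀ p q : List V, p ≠ [] → q ≠ [] → p.head? = some s → q.head? = some s →
    walkWeight w p ≠ ⊤ → walkWeight w q ≠ ⊤ → walkWeight w p = walkWeight w q → p = q

/-- The relaxation operator. -/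
noncomputable def relax (w : V → V → ℝ≥0∞) (f : V → ℝ≥0∞) : V → ℝ≥0∞ :=
  fun v => min (f v) (⨅ u, f u + w u v)

end SSSP

namespace SSSP

theorem Visits.dist_le {V : Type*} {w : V → V → ℝ≥0∞} {s u v : V} (h : Visits w s u v) :
    dist w s u ≤ dist w s v :=
  h ▸ le_self_add

theorem pull_minimum_first_general {V : Type*} (w : V → V → ℝ≥0∞) (s : V)
    (dhat : V → ℝ≥0∞)
    (B 𝓑 : ℝ≥0∞) (hBB : 𝓑 < B) (S : Set V)
    (hS : ∀ v, dhat v ≠ dist w s v → dist w s v < B →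
      ∃ u ∈ S, dhat u = dist w s u ∧ Visits w s u v) :
    ∀ v, dhat v ≠ dist w s v → dist w s v < 𝓑 →
      ∃ u ∈ {x ∈ S | dhat x < 𝓑}, dhat u = dist w s u ∧ Visits w s u v := by
  intro v hv hvB
  obtain ⟨u, huS, hcomplete, hvisits⟩ := hS v hv (hvB.trans hBB)
  exact ⟨u, ⟨huS, hcomplete ▸ hvisits.dist_le.trans_lt hvB⟩, hcomplete, hvisits⟩

/-- Pull Minimum lemma, first part. -/
theorem pull_minimum_first {V : Type*} [Fintype V] (w : V → V → ℝ≥0∞) (s : V)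
    (dhat : V → ℝ≥0∞) (hest : ∀ v, dist w s v ≤ dhat v)
    (B 𝓑 : ℝ≥0∞) (hBB : 𝓑 < B) (S : Set V)
    (hS : ∀ v, dhat v ≠ dist w s v → dist w s v < B →
      ∃ u ∈ S, dhat u = dist w s u ∧ Visits w s u v) :
    ∀ v, dhat v ≠ dist w s v → dist w s v < 𝓑 →
      ∃ u ∈ {x ∈ S | dhat x < 𝓑}, dhat u = dist w s u ∧ Visits w s u v :=
  pull_minimum_first_general w s dhat B 𝓑 hBB S hS

end SSSP
end

section
/- Under the uniqueness assumption, shortest walks are simple: if p is a walk from s to a vertex v whose weight equals d(v), and d(v) < ⊤, then p contains no repeated vertices. -/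
/-!
If a vertex `u` occurs twice on a shortest walk `p`, cutting out the closed subwalk between
the two occurrences gives a walk from `s` to `v` of no larger weight, hence again of weight
`d(v) < ⊤`. Uniqueness of weights then forces the shorter list to equal `p`, which is absurd.
-/

open scoped ENNReal

theorem List.exists_eq_append_cons_append_cons_of_not_nodup {α : Type*} {l : List α}
    (h : ¬ l.Nodup) : ∃ u a b c, l = a ++ u :: b ++ u :: c := by
  obtain ⟨u, hu⟩ : ∃ u, [u, u].Sublist l := by simpa [List.nodup_iff_sublist] using h
  obtain ⟨r₁, r₂, rfl, h₁, h₂⟩ := List.cons_sublist_iff.1 hu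
  obtain ⟨a, b, rfl⟩ := List.append_of_mem h₁
  obtain ⟨b', c, rfl⟩ := List.append_of_mem (List.singleton_sublist.1 h₂)
  exact ⟨u, a, b ++ b', c, by simp⟩

namespace SSSP

section

variable {V : Type*} {w : V → V → ℝ≥0∞}

theorem walkWeight_append_cons (w : V → V → ℝ≥0∞) (x : List V) (u : V) (y : List V) :
    walkWeight w (x ++ u :: y) = walkWeight w (x ++ [u]) + walkWeight w (u :: y) := by
  induction x with
  | nil => simp [walkWeight]
  | cons a x ih =>
    cases x with
    | nil => cases y <;> simp [walkWeight]
    | cons b x =>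
      simp only [List.cons_append, walkWeight] at ih ⊢
      rw [ih, add_assoc]

theorem walkWeight_shortcut_le (w : V → V → ℝ≥0∞) (a : List V) (u : V) (b c : List V) :
    walkWeight w (a ++ u :: c) ≤ walkWeight w (a ++ u :: b ++ u :: c) := by
  calc walkWeight w (a ++ u :: c)
      = walkWeight w (a ++ [u]) + walkWeight w (u :: c) := walkWeight_append_cons w a u c
    _ ≤ walkWeight w (a ++ [u]) + (walkWeight w (u :: b ++ [u]) + walkWeight w (u :: c)) := by
      gcongr
      exact le_add_self
    _ = walkWeight w (a ++ u :: b ++ u :: c) := by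
      rw [← walkWeight_append_cons, List.cons_append, ← walkWeight_append_cons]
      simp

theorem IsWalk.shortcut {s v u : V} {a b c : List V} (h : IsWalk s v (a ++ u :: b ++ u :: c)) :
    IsWalk s v (a ++ u :: c) := by
  obtain ⟨-, hhead, hlast⟩ := h
  refine ⟨by simp, ?_, ?_⟩
  · cases a <;> simpa using hhead
  · rwa [List.getLast?_append_of_ne_nil _ (List.cons_ne_nil u c)] at hlast ⊢

theorem dist_le_walkWeight {u v : V} {p : List V} (hp : IsWalk u v p) :
    dist w u v ≤ walkWeight w p :=
  iInf_le (fun q : {q : List V // IsWalk u v q} => walkWeight w q.1) ⟨p, hp⟩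

end

theorem shortest_walk_nodup_general {V : Type*} (w : V → V → ℝ≥0∞) (s : V)
    (huniq : UniqueWeights w s) (v : V) (p : List V)
    (hp : IsWalk s v p) (hw : walkWeight w p = dist w s v)
    (hfin : dist w s v < ⊤) :
    p.Nodup := by
  by_contra hdup
  obtain ⟨u, a, b, c, rfl⟩ := List.exists_eq_append_cons_append_cons_of_not_nodup hdup
  have hq := hp.shortcut
  have heq : walkWeight w (a ++ u :: c) = walkWeight w (a ++ u :: b ++ u :: c) :=
    le_antisymm (walkWeight_shortcut_le w a u b c) (hw ▸ dist_le_walkWeight hq)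
  have hpfin : walkWeight w (a ++ u :: b ++ u :: c) ≠ ⊤ := hw ▸ hfin.ne
  have hpq := huniq _ _ hq.1 hp.1 hq.2.1 hp.2.1 (heq ▸ hpfin) hpfin heq
  have hlen := congrArg List.length hpq
  simp only [List.length_append, List.length_cons] at hlen
  omega

/-- Under the uniqueness assumption, shortest walks are simple. -/
theorem shortest_walk_nodup {V : Type*} [Fintype V] (w : V → V → ℝ≥0∞) (s : V)
    (huniq : UniqueWeights w s) (v : V) (p : List V)
    (hp : IsWalk s v p) (hw : walkWeight w p = dist w s v)
    (hfin : dist w s v < ⊤) :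
    p.Nodup :=
  shortest_walk_nodup_general w s huniq v p hp hw hfin

end SSSP
end
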